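/- The one-parameter gauge transformations T_h^t on the complex test-function space, defined by (T_h^t f)_μ(p) = f_μ(p) - i t π p_μ ĥ(p) · c(f,h) with c(f,h) = ∫_{C₊} f^ν(p') p'_ν conj(ĥ(p')) d³p'/p₀', preserve the indefinite inner product K: K(T_h^t f, T_h^t g) = K(f, g) for all f, g and all t ∈ ℝ, h real Schwartz. -/
import Mathlib


open MeasureTheory

/-- Minkowski contraction `conj(f^μ(p)) g_μ(p)` of two (contravariant) test functions on
the light cone, parametrized by `𝐩 ∈ ℝ³`. -/
noncomputable def mink (f g : EuclideanSpace ℝ (Fin 3) → Fin 4 → ℂ)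
    (p : EuclideanSpace ℝ (Fin 3)) : ℂ :=
  starRingEnd ℂ (f p 0) * g p 0 - ∑ i : Fin 3, starRingEnd ℂ (f p i.succ) * g p i.succ

/-- Integrand of `K` with respect to the measure `d³p / p₀` on `C₊`. -/
noncomputable def Kint (f g : EuclideanSpace ℝ (Fin 3) → Fin 4 → ℂ)
    (p : EuclideanSpace ℝ (Fin 3)) : ℂ :=
  mink f g p / (‖p‖ : ℂ)

/-- The indefinite inner product `K(f,g) = -2π ∫_{C₊} conj(f^μ) g_μ d³p/p₀`. -/
noncomputable def Kform (f g : EuclideanSpace ℝ (Fin 3) → Fin 4 → ℂ) : ℂ :=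
  (-2 * (Real.pi : ℂ)) * ∫ p : EuclideanSpace ℝ (Fin 3), Kint f g p

/-- The (contravariant) four-vector `p^μ = (‖𝐩‖, 𝐩)` on the light cone. -/
noncomputable def pvec (p : EuclideanSpace ℝ (Fin 3)) : Fin 4 → ℂ :=
  Fin.cons (‖p‖ : ℂ) fun i : Fin 3 => (p i : ℂ)

/-- The contraction `p_ν f^ν(p) = ‖𝐩‖ f⁰(p) − 𝐩 · 𝐟(p)`. -/
noncomputable def pContr (f : EuclideanSpace ℝ (Fin 3) → Fin 4 → ℂ)
    (p : EuclideanSpace ℝ (Fin 3)) : ℂ :=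
  (‖p‖ : ℂ) * f p 0 - ∑ i : Fin 3, (p i : ℂ) * f p i.succ

/-- The coefficient `c(f,h) = ∫_{C₊} f^ν(p') p'_ν conj(ĥ(p')) d³p'/p₀'`. -/
noncomputable def cCoef (f : EuclideanSpace ℝ (Fin 3) → Fin 4 → ℂ)
    (H : EuclideanSpace ℝ (Fin 3) → ℂ) : ℂ :=
  ∫ p : EuclideanSpace ℝ (Fin 3), pContr f p * starRingEnd ℂ (H p) / (‖p‖ : ℂ)

/-- The gauge transformation
`(T_h^t f)_μ(p) = f_μ(p) − i t π p_μ ĥ(p) c(f,h)` (in contravariant components). -/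
noncomputable def gaugeT (t : ℝ) (H : EuclideanSpace ℝ (Fin 3) → ℂ)
    (f : EuclideanSpace ℝ (Fin 3) → Fin 4 → ℂ) :
    EuclideanSpace ℝ (Fin 3) → Fin 4 → ℂ :=
  fun p μ => f p μ - (Complex.I * (t : ℂ) * (Real.pi : ℂ)) * pvec p μ * H p * cCoef f H

/-- The gradient function `p ↦ p^μ ĥ(p)`. -/
noncomputable def gradH (H : EuclideanSpace ℝ (Fin 3) → ℂ) :
    EuclideanSpace ℝ (Fin 3) → Fin 4 → ℂ :=
  fun p μ => pvec p μ * H p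

/-- The one-parameter gauge transformations `T_h^t` preserve the indefinite inner product:
`K(T_h^t f, T_h^t g) = K(f, g)` for all test functions `f, g`, all `t ∈ ℝ` and all (Fourier
transforms `ĥ = H` of) real Schwartz functions `h` (under the natural integrability
assumptions on the test functions). -/
theorem stmt_19 (f g : EuclideanSpace ℝ (Fin 3) → Fin 4 → ℂ)
    (H : EuclideanSpace ℝ (Fin 3) → ℂ)
    (hfg : Integrable (Kint f g))
    (hfG : Integrable (Kint f (gradH H)))
    (hGg : Integrable (Kint (gradH H) g))
    (hGG : Integrable (Kint (gradH H) (gradH H))) :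
    ∀ t : ℝ, Kform (gaugeT t H f) (gaugeT t H g) = Kform f g := by
  intro t
  set G := gradH H with hG
  set a : ℂ := Complex.I * (t : ℂ) * (Real.pi : ℂ) * cCoef f H with ha
  set b : ℂ := Complex.I * (t : ℂ) * (Real.pi : ℂ) * cCoef g H with hb
  -- pointwise norm-squared identity
  have normsq : ∀ p : EuclideanSpace ℝ (Fin 3),
      (‖p‖ : ℂ) * (‖p‖ : ℂ) = ∑ i : Fin 3, (p i : ℂ) * (p i : ℂ) := by
    intro p
    have h : ‖p‖ * ‖p‖ = ∑ i : Fin 3, p i * p i := by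
      rw [EuclideanSpace.norm_eq, Real.mul_self_sqrt (by positivity)]
      congr 1; funext i; rw [Real.norm_eq_abs, sq_abs, sq]
    calc (‖p‖ : ℂ) * (‖p‖ : ℂ) = ((‖p‖ * ‖p‖ : ℝ) : ℂ) := by push_cast; ring
      _ = ∑ i : Fin 3, (p i : ℂ) * (p i : ℂ) := by rw [h]; push_cast; ring
  -- light-cone identity : mink G G = 0
  have hGG0 : ∀ p, Kint G G p = 0 := by
    intro p
    have h0 : mink G G p = 0 := by
      have hn := normsq p
      simp only [mink, hG, gradH, pvec, Fin.cons_zero, Fin.cons_succ, map_mul,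
        Complex.conj_ofReal, Fin.sum_univ_three] at *
      linear_combination (starRingEnd ℂ (H p) * H p) * hn
    simp [Kint, h0]
  -- cross term identities
  have hminkfG : ∀ p, mink f G p = starRingEnd ℂ (pContr f p) * H p := by
    intro p
    simp only [mink, hG, gradH, pvec, Fin.cons_zero, Fin.cons_succ, pContr, map_sub,
      map_mul, map_add, map_sum, Complex.conj_ofReal, Fin.sum_univ_three]
    ring
  have hminkGg : ∀ p, mink G g p = starRingEnd ℂ (H p) * pContr g p := by
    intro p
    simp only [mink, hG, gradH, pvec, Fin.cons_zero, Fin.cons_succ, pContr, map_sub,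
      map_mul, map_add, map_sum, Complex.conj_ofReal, Fin.sum_univ_three]
    ring
  have hintfG : (∫ p : EuclideanSpace ℝ (Fin 3), Kint f G p) = starRingEnd ℂ (cCoef f H) := by
    have : ∀ p, Kint f G p
        = starRingEnd ℂ (pContr f p * starRingEnd ℂ (H p) / (‖p‖ : ℂ)) := by
      intro p
      simp only [Kint, hminkfG, map_div₀, map_mul, RingHomCompTriple.comp_apply,
        RingHom.id_apply, Complex.conj_ofReal, Complex.conj_conj]
    rw [show (fun p => Kint f G p) = fun p =>
        starRingEnd ℂ (pContr f p * starRingEnd ℂ (H p) / (‖p‖ : ℂ)) from funext this]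
    exact integral_conj
  have hintGg : (∫ p : EuclideanSpace ℝ (Fin 3), Kint G g p) = cCoef g H := by
    unfold cCoef
    congr 1; funext p
    rw [Kint, hminkGg]; ring
  -- sesquilinear expansion of the transformed integrand
  have keyK : ∀ p, Kint (gaugeT t H f) (gaugeT t H g) p
      = Kint f g p - b * Kint f G p - starRingEnd ℂ a * Kint G g p
        + starRingEnd ℂ a * b * Kint G G p := by
    intro p
    have hm : mink (gaugeT t H f) (gaugeT t H g) p
        = mink f g p - b * mink f G p - starRingEnd ℂ a * mink G g p
          + starRingEnd ℂ a * b * mink G G p := by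
      simp only [mink, gaugeT, hG, gradH, ha, hb, map_sub, map_mul, Fin.sum_univ_three]
      ring
    simp only [Kint, hm, sub_div, add_div, mul_div_assoc]
  -- integrate
  have hsplit : (∫ p : EuclideanSpace ℝ (Fin 3), Kint (gaugeT t H f) (gaugeT t H g) p)
      = (∫ p : EuclideanSpace ℝ (Fin 3), Kint f g p)
        - b * (∫ p : EuclideanSpace ℝ (Fin 3), Kint f G p)
        - starRingEnd ℂ a * (∫ p : EuclideanSpace ℝ (Fin 3), Kint G g p)
        + starRingEnd ℂ a * b * (∫ p : EuclideanSpace ℝ (Fin 3), Kint G G p) := by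
    rw [show (fun p => Kint (gaugeT t H f) (gaugeT t H g) p)
        = fun p => Kint f g p - b * Kint f G p - starRingEnd ℂ a * Kint G g p
          + starRingEnd ℂ a * b * Kint G G p from funext keyK]
    have h2 : Integrable (fun p : EuclideanSpace ℝ (Fin 3) => b * Kint f G p) :=
      hfG.const_mul b
    have h3 : Integrable (fun p : EuclideanSpace ℝ (Fin 3) =>
        starRingEnd ℂ a * Kint G g p) := hGg.const_mul _
    have h4 : Integrable (fun p : EuclideanSpace ℝ (Fin 3) =>
        starRingEnd ℂ a * b * Kint G G p) := hGG.const_mul _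
    have h12 : Integrable (fun p : EuclideanSpace ℝ (Fin 3) =>
        Kint f g p - b * Kint f G p) := hfg.sub h2
    have h123 : Integrable (fun p : EuclideanSpace ℝ (Fin 3) =>
        Kint f g p - b * Kint f G p - starRingEnd ℂ a * Kint G g p) := h12.sub h3
    rw [integral_add h123 h4, integral_sub h12 h3, integral_sub hfg h2,
      integral_const_mul, integral_const_mul, integral_const_mul]
  have hGGint : (∫ p : EuclideanSpace ℝ (Fin 3), Kint G G p) = 0 := by
    simp [funext hGG0]
  -- conclude
  unfold Kform
  rw [hsplit, hintfG, hintGg, hGGint]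
  simp only [ha, hb, map_mul, Complex.conj_I, Complex.conj_ofReal]
  ring
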